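/- arXiv:2507.06708 — 2 statements merged into one kernel-verified Lean document; each statement's English description precedes it below -/
import Mathlib

section
/- Let integers m, ℓ satisfy m ≥ 5 and 1 ≤ ℓ ≤ m, and let α ∈ (0, π/2) satisfy sin²α = (ℓ(ℓ+m−2) + 2m−8)/(2ℓ(ℓ+m−2)). Then the map q = (sin α · u, cos α) satisfies ∫_{B^m} |∇q|² dx = ½ (ℓ(ℓ+m−2) + 2m−8) · vol(S^{m−1})/(m−2) and ∫_{B^m} |Δq|² dx = ½ ℓ(ℓ+m−2)(ℓ(ℓ+m−2) + 2m−8) · vol(S^{m−1})/(m−4); in particular both integrals are finite, so q has square-integrable first and second derivatives on B^m (q ∈ W^{2,2}). -/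
open MeasureTheory Metric Real RealInnerProductSpace

noncomputable section

abbrev E (m : ℕ) : Type := EuclideanSpace ℝ (Fin m)

/-- The `i`-th partial derivative of a map between Euclidean spaces. -/
def pd {m N : ℕ} (f : E m → E N) (i : Fin m) (x : E m) : E N :=
  fderiv ℝ f x (EuclideanSpace.single i 1)

/-- The componentwise Euclidean Laplacian `Δf = Σ_i ∂_i² f`. -/
def lap {m N : ℕ} (f : E m → E N) (x : E m) : E N :=
  ∑ i : Fin m, pd (fun y => pd f i y) i x

/-- `|∇f|² = Σ_i |∂_i f|²`. -/
def gradSq {m N : ℕ} (f : E m → E N) (x : E m) : ℝ :=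
  ∑ i : Fin m, ‖pd f i x‖ ^ 2

/-- `⟨∇f, ∇g⟩ = Σ_i ⟨∂_i f, ∂_i g⟩`. -/
def gradInner {m N : ℕ} (f g : E m → E N) (x : E m) : ℝ :=
  ∑ i : Fin m, ⟪pd f i x, pd g i x⟫

/-- The deformed generalized equator map `q = (sin α · u, cos α)`. -/
def qmap {m N : ℕ} (α : ℝ) (u : E m → E N) (x : E m) : E (N + 1) :=
  WithLp.toLp 2 (fun i : Fin (N + 1) => if h : (i : ℕ) < N then Real.sin α * u x ⟨i, h⟩ else Real.cos α)

/-- The Hessian quadratic form of the bienergy at `q`, evaluated on `η`. -/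
def Qform {m N : ℕ} (q η : E m → E N) : ℝ :=
  ∫ x in ball (0 : E m) 1,
    (‖lap η x‖ ^ 2 + 2 * (gradSq q x) ^ 2 * ‖η x‖ ^ 2
      - ⟪lap (lap q) x, q x⟫ * ‖η x‖ ^ 2
      - 2 * gradSq q x * gradSq η x - 4 * (gradInner q η x) ^ 2)

/-- Admissible test fields: smooth, compactly supported in the unit ball,
pointwise orthogonal to `q` on `B^m ∖ {0}`. -/
def Admissible {m N : ℕ} (q η : E m → E N) : Prop :=
  ContDiff ℝ (⊤ : ℕ∞) η ∧ tsupport η ⊆ ball (0 : E m) 1 ∧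
    ∀ x ∈ ball (0 : E m) 1 \ {(0 : E m)}, ⟪η x, q x⟫ = 0

/-! Away from the origin `q` is an affine image `sin α • ι ∘ u + const` of `u` under a linear
isometry `ι`, so `|∇q|² = sin²α · ℓ(ℓ+m-2) / |x|²` and `|Δq|² = sin²α · (ℓ(ℓ+m-2))² / |x|⁴`.
In polar coordinates `∫_{B^m} |x|^(-s) dx = m · vol(B^m) / (m - s)` for `s < m`, which covers
`s = 2` and `s = 4` because `m ≥ 5`; substituting the value of `sin²α` gives the constants. -/

open Set

section RadialIntegrals

variable {V : Type*} [NormedAddCommGroup V] [NormedSpace ℝ V] [FiniteDimensional ℝ V]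
  [MeasurableSpace V] [BorelSpace V] [Nontrivial V] (μ : Measure V) [μ.IsAddHaarMeasure]
  {s : ℝ}

theorem integrableOn_unitBall_norm_rpow_neg (hs : s < Module.finrank ℝ V) :
    IntegrableOn (fun x : V => ‖x‖ ^ (-s)) (ball 0 1) μ :=
  integrableOn_ball_of_norm_le_rpow (C := 1) Module.finrank_pos hs
    (ae_of_all _ fun x => by simp [abs_of_nonneg (rpow_nonneg (norm_nonneg x) _)])
    (measurable_norm.pow_const _).aestronglyMeasurable

theorem setIntegral_unitBall_norm_rpow_neg (hs : s < Module.finrank ℝ V) :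
    ∫ x in ball (0 : V) 1, ‖x‖ ^ (-s) ∂μ =
      Module.finrank ℝ V * μ.real (ball 0 1) / (Module.finrank ℝ V - s) := by
  have hradial : (ball (0 : V) 1).indicator (fun x => ‖x‖ ^ (-s)) =
      fun x => (Iio 1).indicator (fun r : ℝ => r ^ (-s)) ‖x‖ := by
    ext x; simp [indicator]
  have hpow : EqOn (fun r : ℝ => r ^ (Module.finrank ℝ V - 1) * r ^ (-s))
      (fun r => r ^ ((Module.finrank ℝ V : ℝ) - 1 - s)) (Ioo 0 1) := fun r hr => by
    dsimp only
    rw [← rpow_natCast, ← rpow_add hr.1, Nat.cast_sub Module.finrank_pos, Nat.cast_one,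
      sub_eq_add_neg _ s]
  have h1D : ∫ r in Ioo (0 : ℝ) 1, r ^ ((Module.finrank ℝ V : ℝ) - 1 - s) =
      1 / (Module.finrank ℝ V - s) := by
    rw [← integral_Ioc_eq_integral_Ioo, ← intervalIntegral.integral_of_le zero_le_one,
      integral_rpow (Or.inl (by linarith)),
      show (Module.finrank ℝ V : ℝ) - 1 - s + 1 = Module.finrank ℝ V - s by ring,
      one_rpow, zero_rpow (by linarith), sub_zero]
  rw [← integral_indicator measurableSet_ball, hradial, integral_fun_norm_addHaar]
  simp_rw [← indicator_smul_apply (Iio 1) (fun r : ℝ => r ^ (Module.finrank ℝ V - 1)),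
    smul_eq_mul]
  rw [setIntegral_indicator measurableSet_Iio, Ioi_inter_Iio,
    setIntegral_congr_fun measurableSet_Ioo hpow, h1D, nsmul_eq_mul]
  ring

theorem ae_restrict_unitBall_ne_zero : ∀ᵐ x ∂μ.restrict (ball (0 : V) 1), x ≠ 0 :=
  ae_restrict_of_ae (compl_mem_ae_iff.mpr (measure_singleton 0))

variable {f : V → ℝ} {C : ℝ}

theorem integrableOn_unitBall_of_eqOn_mul_norm_rpow_neg
    (hf : EqOn f (fun x => C * ‖x‖ ^ (-s)) {0}ᶜ) (hs : s < Module.finrank ℝ V) :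
    IntegrableOn f (ball 0 1) μ :=
  ((integrableOn_unitBall_norm_rpow_neg μ hs).const_mul C).congr
    ((ae_restrict_unitBall_ne_zero μ).mono fun _ hx => (hf hx).symm)

theorem setIntegral_unitBall_of_eqOn_mul_norm_rpow_neg
    (hf : EqOn f (fun x => C * ‖x‖ ^ (-s)) {0}ᶜ) (hs : s < Module.finrank ℝ V) :
    ∫ x in ball 0 1, f x ∂μ =
      C * (Module.finrank ℝ V * μ.real (ball 0 1) / (Module.finrank ℝ V - s)) := by
  rw [integral_congr_ae ((ae_restrict_unitBall_ne_zero μ).mono fun _ hx => hf hx),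
    integral_const_mul, setIntegral_unitBall_norm_rpow_neg μ hs]

end RadialIntegrals

def padZeroₗᵢ (N : ℕ) : E N →ₗᵢ[ℝ] E (N + 1) where
  toFun v := WithLp.toLp 2 fun i : Fin (N + 1) => if h : (i : ℕ) < N then v ⟨i, h⟩ else 0
  map_add' v w := by ext i; by_cases h : (i : ℕ) < N <;> simp [h]
  map_smul' c v := by ext i; by_cases h : (i : ℕ) < N <;> simp [h]
  norm_map' v := by simp [EuclideanSpace.norm_eq, Fin.sum_univ_castSucc]

theorem qmap_eq_padZero {m N : ℕ} (α : ℝ) (u : E m → E N) :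
    qmap α u = fun x =>
      (Real.sin α • (padZeroₗᵢ N).toContinuousLinearMap) (u x) +
        EuclideanSpace.single (Fin.last N) (Real.cos α) := by
  ext x i
  by_cases h : (i : ℕ) < N
  · simp [qmap, padZeroₗᵢ, h, Fin.ext_iff, h.ne]
  · obtain rfl : i = Fin.last N := Fin.ext (by have := i.isLt; simp; omega)
    simp [qmap, padZeroₗᵢ]

section AffineComp

variable {m N K : ℕ} {f : E m → E N} {x : E m} (T : E N →L[ℝ] E K) (b : E K)

theorem pd_clm_comp_add_const (hf : DifferentiableAt ℝ f x) (i : Fin m) :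
    pd (fun y => T (f y) + b) i x = T (pd f i x) := by
  rw [pd, fderiv_add_const, fderiv_fun_comp x T.differentiableAt hf, T.fderiv]
  rfl

theorem lap_clm_comp_add_const (hf : ContDiffAt ℝ 2 f x) :
    lap (fun y => T (f y) + b) x = T (lap f x) := by
  have hpd : ∀ i, (fun y => pd (fun y => T (f y) + b) i y) =ᶠ[nhds x] fun y => T (pd f i y) :=
    fun i => (hf.eventually (by simp)).mono fun y hy =>
      pd_clm_comp_add_const T b (hy.differentiableAt (by simp)) i
  have hdiff : ∀ i, DifferentiableAt ℝ (fun y => pd f i y) x := fun i =>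
    ((hf.fderiv_right (m := 1) (by norm_num)).differentiableAt one_ne_zero).clm_apply
      (differentiableAt_const _)
  simp only [lap, map_sum]
  refine Finset.sum_congr rfl fun i _ => ?_
  rw [pd, (hpd i).fderiv_eq, fderiv_fun_comp x T.differentiableAt (hdiff i), T.fderiv]
  rfl

end AffineComp

section Qmap

variable {m N : ℕ} {α : ℝ} {u : E m → E N} {x : E m}

theorem norm_sin_smul_padZero (α : ℝ) (v : E N) :
    ‖(Real.sin α • (padZeroₗᵢ N).toContinuousLinearMap) v‖ = |Real.sin α| * ‖v‖ := by
  simp [norm_smul]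

theorem gradSq_qmap (hu : DifferentiableAt ℝ u x) :
    gradSq (qmap α u) x = Real.sin α ^ 2 * gradSq u x := by
  simp only [gradSq, qmap_eq_padZero, pd_clm_comp_add_const _ _ hu, norm_sin_smul_padZero,
    mul_pow, sq_abs, Finset.mul_sum]

theorem norm_lap_qmap (hu : ContDiffAt ℝ 2 u x) :
    ‖lap (qmap α u) x‖ = |Real.sin α| * ‖lap u x‖ := by
  rw [qmap_eq_padZero, lap_clm_comp_add_const _ _ hu, norm_sin_smul_padZero]

theorem gradSq_qmap_eqOn {c : ℝ} (hu : DifferentiableOn ℝ u {0}ᶜ)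
    (hu_grad : ∀ x : E m, x ≠ 0 → gradSq u x = c / ‖x‖ ^ 2) :
    EqOn (gradSq (qmap α u)) (fun x => Real.sin α ^ 2 * c * ‖x‖ ^ (-2 : ℝ)) {0}ᶜ :=
    fun x hx => by
  dsimp only
  rw [gradSq_qmap (hu.differentiableAt (isOpen_compl_singleton.mem_nhds hx)), hu_grad x hx, rpow_neg (norm_nonneg x), rpow_two]
  ring

theorem sq_norm_lap_qmap_eqOn {c : ℝ} (hu_smooth : ContDiffOn ℝ 2 u {0}ᶜ)
    (hu_unit : ∀ x : E m, x ≠ 0 → ‖u x‖ = 1)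
    (hu_lap : ∀ x : E m, x ≠ 0 → lap u x = (-c / ‖x‖ ^ 2) • u x) :
    EqOn (fun x => ‖lap (qmap α u) x‖ ^ 2)
      (fun x => Real.sin α ^ 2 * c ^ 2 * ‖x‖ ^ (-4 : ℝ)) {0}ᶜ := fun x hx => by
  dsimp only
  rw [norm_lap_qmap (hu_smooth.contDiffAt (isOpen_compl_singleton.mem_nhds hx)), hu_lap x hx,
    norm_smul, hu_unit x hx, rpow_neg (norm_nonneg x), rpow_ofNat, norm_div, norm_neg,
    norm_pow, norm_norm]
  simp only [mul_pow, sq_abs, div_pow, Real.norm_eq_abs]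
  ring

end Qmap

theorem q_energy_integrals_general
    (m ℓ N : ℕ) (hm : 5 ≤ m) (hℓ1 : 1 ≤ ℓ)
    (u : E m → E N)
    (hu_smooth : ContDiffOn ℝ (⊤ : ℕ∞) u {(0 : E m)}ᶜ)
    (hu_unit : ∀ x : E m, x ≠ 0 → ‖u x‖ = 1)
    (hu_lap : ∀ x : E m, x ≠ 0 →
      lap u x = (-((ℓ : ℝ) * ((ℓ : ℝ) + (m : ℝ) - 2)) / ‖x‖ ^ 2) • u x)
    (hu_grad : ∀ x : E m, x ≠ 0 →
      gradSq u x = (ℓ : ℝ) * ((ℓ : ℝ) + (m : ℝ) - 2) / ‖x‖ ^ 2)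
    (α : ℝ)
    (hsin : Real.sin α ^ 2 =
      ((ℓ : ℝ) * ((ℓ : ℝ) + (m : ℝ) - 2) + 2 * (m : ℝ) - 8) /
        (2 * (ℓ : ℝ) * ((ℓ : ℝ) + (m : ℝ) - 2))) :
    IntegrableOn (fun x => gradSq (qmap α u) x) (ball (0 : E m) 1) volume ∧
    IntegrableOn (fun x => ‖lap (qmap α u) x‖ ^ 2) (ball (0 : E m) 1) volume ∧
    (∫ x in ball (0 : E m) 1, gradSq (qmap α u) x) =
      (1 / 2) * ((ℓ : ℝ) * ((ℓ : ℝ) + (m : ℝ) - 2) + 2 * (m : ℝ) - 8) *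
        ((m : ℝ) * (volume (ball (0 : E m) 1)).toReal) / ((m : ℝ) - 2) ∧
    (∫ x in ball (0 : E m) 1, ‖lap (qmap α u) x‖ ^ 2) =
      (1 / 2) * ((ℓ : ℝ) * ((ℓ : ℝ) + (m : ℝ) - 2)) *
        ((ℓ : ℝ) * ((ℓ : ℝ) + (m : ℝ) - 2) + 2 * (m : ℝ) - 8) *
        ((m : ℝ) * (volume (ball (0 : E m) 1)).toReal) / ((m : ℝ) - 4) := by
  have : Nonempty (Fin m) := ⟨⟨0, by omega⟩⟩
  have hmR : (5 : ℝ) ≤ m := by exact_mod_cast hm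
  have hgrad := gradSq_qmap_eqOn (α := α) (hu_smooth.differentiableOn (by simp)) hu_grad
  have hlap := sq_norm_lap_qmap_eqOn (α := α) (hu_smooth.of_le (by norm_cast)) hu_unit hu_lap
  have h2 : (2 : ℝ) < Module.finrank ℝ (E m) := by rw [finrank_euclideanSpace_fin]; linarith
  have h4 : (4 : ℝ) < Module.finrank ℝ (E m) := by rw [finrank_euclideanSpace_fin]; linarith
  have hℓ0 : (ℓ : ℝ) ≠ 0 := Nat.cast_ne_zero.mpr (by omega)
  have hℓm2 : (ℓ : ℝ) + m - 2 ≠ 0 := by linarith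
  have hm2 : (m : ℝ) - 2 ≠ 0 := by linarith
  have hm4 : (m : ℝ) - 4 ≠ 0 := by linarith
  refine ⟨integrableOn_unitBall_of_eqOn_mul_norm_rpow_neg volume hgrad h2,
    integrableOn_unitBall_of_eqOn_mul_norm_rpow_neg volume hlap h4, ?_, ?_⟩
  · rw [setIntegral_unitBall_of_eqOn_mul_norm_rpow_neg volume hgrad h2,
      finrank_euclideanSpace_fin, hsin, measureReal_def]
    field_simp
  · rw [setIntegral_unitBall_of_eqOn_mul_norm_rpow_neg volume hlap h4,
      finrank_euclideanSpace_fin, hsin, measureReal_def]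
    field_simp

/-- Energy integrals of q = (sin α · u, cos α) over the unit ball; here
the surface measure of the unit sphere is vol(S^{m−1}) = m · vol(B^m). In particular
both integrals are finite, i.e. q ∈ W^{2,2}. -/
theorem q_energy_integrals
    (m ℓ N : ℕ) (hm : 5 ≤ m) (hℓ1 : 1 ≤ ℓ) (hℓm : ℓ ≤ m)
    (u : E m → E N)
    (hu_smooth : ContDiffOn ℝ (⊤ : ℕ∞) u {(0 : E m)}ᶜ)
    (hu_unit : ∀ x : E m, x ≠ 0 → ‖u x‖ = 1)
    (hu_hom : ∀ c : ℝ, 0 < c → ∀ x : E m, u (c • x) = u x)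
    (hu_lap : ∀ x : E m, x ≠ 0 →
      lap u x = (-((ℓ : ℝ) * ((ℓ : ℝ) + (m : ℝ) - 2)) / ‖x‖ ^ 2) • u x)
    (hu_grad : ∀ x : E m, x ≠ 0 →
      gradSq u x = (ℓ : ℝ) * ((ℓ : ℝ) + (m : ℝ) - 2) / ‖x‖ ^ 2)
    (α : ℝ) (hα : α ∈ Set.Ioo 0 (π / 2))
    (hsin : Real.sin α ^ 2 =
      ((ℓ : ℝ) * ((ℓ : ℝ) + (m : ℝ) - 2) + 2 * (m : ℝ) - 8) /
        (2 * (ℓ : ℝ) * ((ℓ : ℝ) + (m : ℝ) - 2))) :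
    IntegrableOn (fun x => gradSq (qmap α u) x) (ball (0 : E m) 1) volume ∧
    IntegrableOn (fun x => ‖lap (qmap α u) x‖ ^ 2) (ball (0 : E m) 1) volume ∧
    (∫ x in ball (0 : E m) 1, gradSq (qmap α u) x) =
      (1 / 2) * ((ℓ : ℝ) * ((ℓ : ℝ) + (m : ℝ) - 2) + 2 * (m : ℝ) - 8) *
        ((m : ℝ) * (volume (ball (0 : E m) 1)).toReal) / ((m : ℝ) - 2) ∧
    (∫ x in ball (0 : E m) 1, ‖lap (qmap α u) x‖ ^ 2) =
      (1 / 2) * ((ℓ : ℝ) * ((ℓ : ℝ) + (m : ℝ) - 2)) *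
        ((ℓ : ℝ) * ((ℓ : ℝ) + (m : ℝ) - 2) + 2 * (m : ℝ) - 8) *
        ((m : ℝ) * (volume (ball (0 : E m) 1)).toReal) / ((m : ℝ) - 4) :=
  q_energy_integrals_general m ℓ N hm hℓ1 u hu_smooth hu_unit hu_lap hu_grad α hsin

end
end

section
/- Let u : U → S^n ⊂ ℝ^{n+1} be a smooth map defined on an open neighborhood U of the closed unit ball in ℝ^m, and let V : B^m → ℝ^{n+1} be a smooth map with compact support contained in B^m such that ⟨u(x), V(x)⟩ = 0 for all x. Then ∫_{B^m} ( ⟨u, ΔV⟩² + ⟨V, Δu⟩² + 2 Σ_{i=1}^m ⟨V, ∂_i(Δu)⟩⟨∂_i u, V⟩ + 2 Σ_{i=1}^m ⟨Δu, ∂_i V⟩⟨∂_i u, V⟩ + 2 ⟨ΔV, u⟩ Σ_{i=1}^m ⟨∂_i u, ∂_i V⟩ ) dx = 0. -/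
/-!
Differentiating `⟪u, V⟫ = 0` twice along each coordinate direction and summing gives
`⟪u, ΔV⟫ + 2 ⟪∇u, ∇V⟫ + ⟪Δu, V⟫ = 0` on the ball. Using this relation, the integrand is
exactly twice the divergence of the field `W_i = ⟪V, Δu⟫ ⟪∂_i u, V⟫`, which is compactly
supported in the ball, so its integral vanishes.
-/

open MeasureTheory Metric Real RealInnerProductSpace

noncomputable section

open scoped ContDiff Topology

theorem ContDiffOn.contDiff_of_tsupport_subset {F G : Type*} [NormedAddCommGroup F]
    [NormedSpace ℝ F] [NormedAddCommGroup G] [NormedSpace ℝ G] {f : F → G} {s : Set F}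
    {n : WithTop ℕ∞} (hs : IsOpen s) (hf : ContDiffOn ℝ n f s) (hsupp : tsupport f ⊆ s) :
    ContDiff ℝ n f := by
  refine contDiff_iff_contDiffAt.2 fun x => ?_
  by_cases hx : x ∈ s
  · exact hf.contDiffAt (hs.mem_nhds hx)
  · exact contDiffAt_const.congr_of_eventuallyEq
      (notMem_tsupport_iff_eventuallyEq.1 fun h => hx (hsupp h))

section Calculus

variable {m N : ℕ} {f g : E m → E N} {x : E m} {s : Set (E m)}

theorem ContDiffAt.pd {n k : WithTop ℕ∞} (hf : ContDiffAt ℝ n f x) (hk : k + 1 ≤ n)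
    (i : Fin m) : ContDiffAt ℝ k (pd f i) x :=
  (hf.fderiv_right hk).clm_apply contDiffAt_const

theorem ContDiffAt.lap {n k : WithTop ℕ∞} (hf : ContDiffAt ℝ n f x) (hk : k + 2 ≤ n) :
    ContDiffAt ℝ k (lap f) x :=
  ContDiffAt.sum fun i _ =>
    (hf.pd (k := k + 1) (by rwa [add_assoc, one_add_one_eq_two]) i).pd le_rfl i

theorem fderiv_inner_single (hf : DifferentiableAt ℝ f x) (hg : DifferentiableAt ℝ g x)
    (i : Fin m) :
    fderiv ℝ (fun y => ⟪f y, g y⟫) x (EuclideanSpace.single i 1) =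
      ⟪f x, pd g i x⟫ + ⟪pd f i x, g x⟫ :=
  fderiv_inner_apply ℝ hf hg _

theorem inner_pd_add_inner_pd_eq_zero (hs : IsOpen s) (hf : DifferentiableOn ℝ f s)
    (hg : DifferentiableOn ℝ g s) (h : ∀ y ∈ s, ⟪f y, g y⟫ = 0) (hx : x ∈ s) (i : Fin m) :
    ⟪f x, pd g i x⟫ + ⟪pd f i x, g x⟫ = 0 := by
  have hzero : (fun y => ⟪f y, g y⟫) =ᶠ[𝓝 x] fun _ => 0 :=
    Filter.eventually_of_mem (hs.mem_nhds hx) h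
  rw [← fderiv_inner_single (hf.differentiableAt (hs.mem_nhds hx))
    (hg.differentiableAt (hs.mem_nhds hx)), hzero.fderiv_eq]
  simp

theorem inner_lap_add_two_mul_gradInner_add_inner_lap_eq_zero (hs : IsOpen s)
    (hf : ContDiffOn ℝ 2 f s) (hg : ContDiffOn ℝ 2 g s) (h : ∀ y ∈ s, ⟪f y, g y⟫ = 0)
    (hx : x ∈ s) :
    ⟪f x, lap g x⟫ + 2 * gradInner f g x + ⟪lap f x, g x⟫ = 0 := by
  have hdiff {φ : E m → E N} (hφ : ContDiffOn ℝ 2 φ s) :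
      DifferentiableOn ℝ φ s ∧ ∀ i, DifferentiableOn ℝ (pd φ i) s :=
    ⟨hφ.differentiableOn two_ne_zero, fun i y hy =>
      (((hφ.contDiffAt (hs.mem_nhds hy)).pd (k := 1) le_rfl i).differentiableAt
        one_ne_zero).differentiableWithinAt⟩
  obtain ⟨hf₀, hf₁⟩ := hdiff hf
  obtain ⟨hg₀, hg₁⟩ := hdiff hg
  have hsecond (i : Fin m) :
      ⟪f x, pd (pd g i) i x⟫ + 2 * ⟪pd f i x, pd g i x⟫ + ⟪pd (pd f i) i x, g x⟫ = 0 := by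
    have hfirst : (fun y => ⟪f y, pd g i y⟫ + ⟪pd f i y, g y⟫) =ᶠ[𝓝 x] fun _ => 0 :=
      Filter.eventually_of_mem (hs.mem_nhds hx) fun y hy =>
        inner_pd_add_inner_pd_eq_zero hs hf₀ hg₀ h hy i
    have hderiv := congrArg (fun L : E m →L[ℝ] ℝ => L (EuclideanSpace.single i 1))
      hfirst.fderiv_eq
    have hxs := hs.mem_nhds hx
    rw [fderiv_fun_add ((hf₀.differentiableAt hxs).inner ℝ (hg₁ i |>.differentiableAt hxs))
      ((hf₁ i |>.differentiableAt hxs).inner ℝ (hg₀.differentiableAt hxs)), fderiv_fun_const,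
      Pi.zero_apply, zero_apply, add_apply, fderiv_inner_single (hf₀.differentiableAt hxs)
        (hg₁ i |>.differentiableAt hxs),
      fderiv_inner_single (hf₁ i |>.differentiableAt hxs) (hg₀.differentiableAt hxs)] at hderiv
    linarith
  have hsum := Finset.sum_eq_zero fun i (_ : i ∈ Finset.univ) => hsecond i
  simpa only [lap, gradInner, Finset.sum_add_distrib, ← Finset.mul_sum, ← inner_sum,
    ← sum_inner] using hsum

end Calculus

section Divergence

theorem integral_fderiv_apply_eq_zero {F : Type*} [NormedAddCommGroup F] [NormedSpace ℝ F]
    [FiniteDimensional ℝ F] [MeasurableSpace F] [BorelSpace F] {μ : Measure F}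
    [μ.IsAddHaarMeasure] {f : F → ℝ} (hf : ContDiff ℝ 1 f) (hsupp : HasCompactSupport f)
    (v : F) : ∫ x, fderiv ℝ f x v ∂μ = 0 := by
  have hf' : Continuous (fderiv ℝ f · v) :=
    (hf.continuous_fderiv one_ne_zero).clm_apply continuous_const
  simpa using integral_mul_fderiv_eq_neg_fderiv_mul_of_integrable (μ := μ)
    (f := fun _ => (1 : ℝ)) (g := f) (v := v) (by simp)
    (by simpa using hf'.integrable_of_hasCompactSupport (hsupp.fderiv_apply ℝ v))
    (by simpa using hf.continuous.integrable_of_hasCompactSupport hsupp)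
    (fun _ _ => differentiableAt_const _) (fun x _ => hf.differentiable one_ne_zero x)

variable {m : ℕ}

def divergence (W : Fin m → E m → ℝ) (x : E m) : ℝ :=
  ∑ i, fderiv ℝ (W i) x (EuclideanSpace.single i 1)

theorem setIntegral_divergence_eq_zero {W : Fin m → E m → ℝ} {s : Set (E m)}
    (hW : ∀ i, ContDiff ℝ 1 (W i)) (hsupp : ∀ i, HasCompactSupport (W i))
    (hs : ∀ i, tsupport (W i) ⊆ s) : ∫ x in s, divergence W x = 0 := by
  have hint (i : Fin m) : Integrable (fderiv ℝ (W i) · (EuclideanSpace.single i 1)) :=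
    ((hW i).continuous_fderiv one_ne_zero |>.clm_apply continuous_const)
      |>.integrable_of_hasCompactSupport ((hsupp i).fderiv_apply ℝ _)
  rw [setIntegral_eq_integral_of_forall_compl_eq_zero]
  · simp only [divergence]
    rw [integral_finsetSum _ fun i _ => hint i]
    exact Finset.sum_eq_zero fun i _ => integral_fderiv_apply_eq_zero (hW i) (hsupp i) _
  · intro x hx
    refine Finset.sum_eq_zero fun i _ => ?_
    rw [fderiv_of_notMem_tsupport ℝ fun h => hx (hs i h), zero_apply]

end Divergence

section Flux

variable {m N : ℕ} {u V : E m → E N} {x : E m} {s : Set (E m)}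

def fluxField (u V : E m → E N) (i : Fin m) (y : E m) : ℝ :=
  ⟪V y, lap u y⟫ * ⟪pd u i y, V y⟫

theorem tsupport_fluxField_subset (i : Fin m) : tsupport (fluxField u V i) ⊆ tsupport V :=
  closure_mono <| Function.support_subset_iff'.2 fun y hy => by
    simp [fluxField, Function.notMem_support.1 hy]

theorem contDiff_fluxField (hs : IsOpen s) (hu : ContDiffOn ℝ 3 u s) (hV : ContDiff ℝ 1 V)
    (hVs : tsupport V ⊆ s) (i : Fin m) : ContDiff ℝ 1 (fluxField u V i) := by
  refine ContDiffOn.contDiff_of_tsupport_subset hs (fun y hy => ?_)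
    ((tsupport_fluxField_subset i).trans hVs)
  have hu' := hu.contDiffAt (hs.mem_nhds hy)
  exact ((hV.contDiffAt.inner ℝ (hu'.lap le_rfl)).mul
    ((hu'.pd (by norm_num) i).inner ℝ hV.contDiffAt)).contDiffWithinAt

theorem divergence_fluxField (hu : ContDiffAt ℝ 3 u x) (hV : DifferentiableAt ℝ V x) :
    divergence (fluxField u V) x =
      ⟪V x, lap u x⟫ * (gradInner u V x + ⟪lap u x, V x⟫) +
        ∑ i, ⟪pd u i x, V x⟫ * (⟪V x, pd (lap u) i x⟫ + ⟪pd V i x, lap u x⟫) := by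
  have hlap : DifferentiableAt ℝ (lap u) x :=
    (hu.lap (k := 1) le_rfl).differentiableAt one_ne_zero
  have hpd (i : Fin m) : DifferentiableAt ℝ (pd u i) x :=
    (hu.pd (k := 2) le_rfl i).differentiableAt two_ne_zero
  have hterm (i : Fin m) : fderiv ℝ (fluxField u V i) x (EuclideanSpace.single i 1) =
      ⟪V x, lap u x⟫ * (⟪pd u i x, pd V i x⟫ + ⟪pd (pd u i) i x, V x⟫) +
        ⟪pd u i x, V x⟫ * (⟪V x, pd (lap u) i x⟫ + ⟪pd V i x, lap u x⟫) := by
    change fderiv ℝ (fun y => ⟪V y, lap u y⟫ * ⟪pd u i y, V y⟫) x _ = _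
    rw [fderiv_fun_mul (hV.inner ℝ hlap) ((hpd i).inner ℝ hV), add_apply, smul_apply,
      smul_apply, fderiv_inner_single (hpd i) hV, fderiv_inner_single hV hlap, smul_eq_mul,
      smul_eq_mul]
  simp only [divergence, hterm, Finset.sum_add_distrib, ← Finset.mul_sum, mul_add, gradInner,
    lap, ← sum_inner]

theorem integrand_eq_two_mul_divergence_fluxField (hs : IsOpen s) (hu : ContDiffOn ℝ 3 u s)
    (hV : ContDiffOn ℝ 2 V s) (horth : ∀ y ∈ s, ⟪u y, V y⟫ = 0) (hx : x ∈ s) :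
    ⟪u x, lap V x⟫ ^ 2 + ⟪V x, lap u x⟫ ^ 2
        + 2 * (∑ i : Fin m, ⟪V x, pd (fun y => lap u y) i x⟫ * ⟪pd u i x, V x⟫)
        + 2 * (∑ i : Fin m, ⟪lap u x, pd V i x⟫ * ⟪pd u i x, V x⟫)
        + 2 * ⟪lap V x, u x⟫ * (∑ i : Fin m, ⟪pd u i x, pd V i x⟫) =
      2 * divergence (fluxField u V) x := by
  have hrel := inner_lap_add_two_mul_gradInner_add_inner_lap_eq_zero hs
    (hu.of_le (by norm_num)) hV horth hx
  rw [divergence_fluxField (hu.contDiffAt (hs.mem_nhds hx))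
    ((hV.differentiableOn two_ne_zero).differentiableAt (hs.mem_nhds hx))]
  have hsum : ∑ i : Fin m, ⟪pd u i x, V x⟫ * (⟪V x, pd (lap u) i x⟫ + ⟪pd V i x, lap u x⟫) =
      ∑ i : Fin m, ⟪V x, pd (fun y => lap u y) i x⟫ * ⟪pd u i x, V x⟫ +
        ∑ i : Fin m, ⟪lap u x, pd V i x⟫ * ⟪pd u i x, V x⟫ := by
    rw [← Finset.sum_add_distrib]
    refine Finset.sum_congr rfl fun i _ => ?_
    rw [real_inner_comm (lap u x)]
    ring
  have hVu : ⟪lap V x, u x⟫ = ⟪u x, lap V x⟫ := real_inner_comm _ _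
  have huV : ⟪lap u x, V x⟫ = ⟪V x, lap u x⟫ := real_inner_comm _ _
  rw [hsum, hVu]
  rw [huV] at hrel ⊢
  unfold gradInner at hrel ⊢
  linear_combination (⟪u x, lap V x⟫ - ⟪V x, lap u x⟫) * hrel

end Flux

theorem key_integral_identity_general
    (m n : ℕ) (U : Set (E m))
    (hUb : closedBall (0 : E m) 1 ⊆ U)
    (u : E m → E (n + 1))
    (hu_smooth : ContDiffOn ℝ (⊤ : ℕ∞) u U)
    (V : E m → E (n + 1)) (hV_smooth : ContDiff ℝ (⊤ : ℕ∞) V)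
    (hV_supp : tsupport V ⊆ ball (0 : E m) 1)
    (horth : ∀ x ∈ ball (0 : E m) 1, ⟪u x, V x⟫ = 0) :
    ∫ x in ball (0 : E m) 1,
      (⟪u x, lap V x⟫ ^ 2 + ⟪V x, lap u x⟫ ^ 2
        + 2 * (∑ i : Fin m, ⟪V x, pd (fun y => lap u y) i x⟫ * ⟪pd u i x, V x⟫)
        + 2 * (∑ i : Fin m, ⟪lap u x, pd V i x⟫ * ⟪pd u i x, V x⟫)
        + 2 * ⟪lap V x, u x⟫ * (∑ i : Fin m, ⟪pd u i x, pd V i x⟫)) = 0 := by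
  have hu : ContDiffOn ℝ 3 u (ball 0 1) :=
    (hu_smooth.mono (ball_subset_closedBall.trans hUb)).of_le (WithTop.coe_le_coe.2 le_top)
  have hV : ContDiff ℝ 2 V := hV_smooth.of_le (WithTop.coe_le_coe.2 le_top)
  have hV_compact : HasCompactSupport V :=
    (isCompact_closedBall 0 1).of_isClosed_subset (isClosed_tsupport V)
      (hV_supp.trans ball_subset_closedBall)
  rw [setIntegral_congr_fun measurableSet_ball fun x hx =>
      integrand_eq_two_mul_divergence_fluxField isOpen_ball hu hV.contDiffOn horth hx,
    integral_const_mul,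
    setIntegral_divergence_eq_zero
      (contDiff_fluxField isOpen_ball hu (hV.of_le one_le_two) hV_supp)
      (fun i => hV_compact.of_isClosed_subset (isClosed_tsupport _) (tsupport_fluxField_subset i))
      (fun i => (tsupport_fluxField_subset i).trans hV_supp), mul_zero]

/-- The key integral identity showing that the intrinsic (Jiang) and the
extrinsic second variation formulas of the bienergy coincide for sphere-valued maps. -/
theorem key_integral_identity
    (m n : ℕ) (U : Set (E m)) (hU : IsOpen U)
    (hUb : closedBall (0 : E m) 1 ⊆ U)
    (u : E m → E (n + 1))
    (hu_smooth : ContDiffOn ℝ (⊤ : ℕ∞) u U)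
    (hu_sphere : ∀ x ∈ U, ‖u x‖ = 1)
    (V : E m → E (n + 1)) (hV_smooth : ContDiff ℝ (⊤ : ℕ∞) V)
    (hV_supp : tsupport V ⊆ ball (0 : E m) 1)
    (horth : ∀ x ∈ ball (0 : E m) 1, ⟪u x, V x⟫ = 0) :
    ∫ x in ball (0 : E m) 1,
      (⟪u x, lap V x⟫ ^ 2 + ⟪V x, lap u x⟫ ^ 2
        + 2 * (∑ i : Fin m, ⟪V x, pd (fun y => lap u y) i x⟫ * ⟪pd u i x, V x⟫)
        + 2 * (∑ i : Fin m, ⟪lap u x, pd V i x⟫ * ⟪pd u i x, V x⟫)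
        + 2 * ⟪lap V x, u x⟫ * (∑ i : Fin m, ⟪pd u i x, pd V i x⟫)) = 0 :=
  key_integral_identity_general m n U hUb u hu_smooth V hV_smooth hV_supp horth

end
end
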